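/- For p = 2, the constant κ_{d,p,α} defined by -(π^{(d-1)/2}Γ((1+α)/2)/Γ((α+d)/2))·(B((α-1)/2+1,-α) + B(α-(α-1)/2,-α) + 1/α) coincides with the Bogdan–Dyda constant κ_{d,α} = (π^{(d-1)/2}Γ((1+α)/2)/Γ((α+d)/2))·(B((1+α)/2,(2-α)/2) - 2^α)/(α·2^α), for α ∈ (0,2), α ≠ 1. -/

import Mathlib

open Real

noncomputable def Bet (x y : ℝ) : ℝ := Real.Gamma x * Real.Gamma y / Real.Gamma (x + y)

noncomputable def kappa (d : ℕ) (p α : ℝ) : ℝ :=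
  -(Real.pi ^ (((d : ℝ) - 1) / 2) * Real.Gamma ((1 + α) / 2) / Real.Gamma ((α + d) / 2)) *
    (Bet ((α - 1) / p + 1) (-α) + Bet (α - (α - 1) / p) (-α) + 1 / α)

/-
For p = 2 both Beta terms of κ_{d,p,α} equal B((1+α)/2, -α). Legendre's duplication formula at
(1-α)/2, together with Γ(1-α) = -α Γ(-α), turns Γ(-α)/Γ((1-α)/2) into a multiple of Γ((2-α)/2),
which gives B((1+α)/2, -α) = -B((1+α)/2, (2-α)/2) / (2 α 2^α); the rest is algebra.
-/

namespace Real

theorem Gamma_three_div_two : Gamma (3 / 2) = √π / 2 := by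
  rw [show (3 / 2 : ℝ) = 1 / 2 + 1 by norm_num, Gamma_add_one (by norm_num), Gamma_one_half_eq]
  ring

theorem Gamma_ne_zero_of_neg_one_lt {s : ℝ} (hs : -1 < s) (hs0 : s ≠ 0) : Gamma s ≠ 0 := by
  refine Gamma_ne_zero fun m hm => ?_
  rcases m with _ | m
  · simp_all
  · push_cast at hm
    linarith [(Nat.cast_nonneg m : (0 : ℝ) ≤ m)]

theorem Gamma_one_sub_div_two_mul_Gamma_two_sub_div_two {α : ℝ} (hα : α ≠ 0) :
    Gamma ((1 - α) / 2) * Gamma ((2 - α) / 2) = -(α * 2 ^ α * √π * Gamma (-α)) := by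
  have hdup := Gamma_mul_Gamma_add_half ((1 - α) / 2)
  have hshift : Gamma (1 - α) = -α * Gamma (-α) := by
    simpa [neg_add_eq_sub] using Gamma_add_one (neg_ne_zero.mpr hα)
  rw [show (1 - α) / 2 + 1 / 2 = (2 - α) / 2 by ring, show 2 * ((1 - α) / 2) = 1 - α by ring,
    show 1 - (1 - α) = α by ring, hshift] at hdup
  rw [hdup]
  ring

end Real

theorem Bet_one_add_div_two_neg {α : ℝ} (hα : α ≠ 0) (hΓ : Gamma ((1 - α) / 2) ≠ 0) :
    Bet ((1 + α) / 2) (-α) = -Bet ((1 + α) / 2) ((2 - α) / 2) / (2 * α * 2 ^ α) := by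
  have hdup := Gamma_one_sub_div_two_mul_Gamma_two_sub_div_two hα
  rw [Bet, Bet, show (1 + α) / 2 + -α = (1 - α) / 2 by ring,
    show (1 + α) / 2 + (2 - α) / 2 = 3 / 2 by ring, Gamma_three_div_two]
  field_simp
  linear_combination Gamma ((1 + α) / 2) * hdup

theorem kappa_two_eq_BogdanDyda_general (d : ℕ) (α : ℝ) (hα : α ∈ Set.Ioo (0:ℝ) 2)
    (hα1 : α ≠ 1) :
    kappa d 2 α =
      Real.pi ^ (((d : ℝ) - 1) / 2) * Real.Gamma ((1 + α) / 2) / Real.Gamma ((α + d) / 2) *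
        ((Bet ((1 + α) / 2) ((2 - α) / 2) - 2 ^ α) / (α * 2 ^ α)) := by
  obtain ⟨hα0, hα2⟩ := hα
  have hΓ : Gamma ((1 - α) / 2) ≠ 0 :=
    Gamma_ne_zero_of_neg_one_lt (by linarith) fun h => hα1 (by linarith)
  rw [kappa, show (α - 1) / 2 + 1 = (1 + α) / 2 by ring,
    show α - (α - 1) / 2 = (1 + α) / 2 by ring, Bet_one_add_div_two_neg hα0.ne' hΓ]
  field_simp
  ring

theorem kappa_two_eq_BogdanDyda (d : ℕ) (hd : 1 ≤ d) (α : ℝ) (hα : α ∈ Set.Ioo (0:ℝ) 2)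
    (hα1 : α ≠ 1) :
    kappa d 2 α =
      Real.pi ^ (((d : ℝ) - 1) / 2) * Real.Gamma ((1 + α) / 2) / Real.Gamma ((α + d) / 2) *
        ((Bet ((1 + α) / 2) ((2 - α) / 2) - 2 ^ α) / (α * 2 ^ α)) :=
  kappa_two_eq_BogdanDyda_general d α hα hα1
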